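/- Let F = [f₁,…,f_k] be a Parseval tight frame (bound b = 1) in ℂⁿ and let I ⊆ {1,…,k}. Let Q_I be the orthogonal projection of ℂᵏ onto span{e_i : i ∈ I}. If F*F commutes with Q_I, then there exists a subspace V ⊆ ℂⁿ such that (fᵢ)_{i∈I} is a Parseval tight frame for V and (fᵢ)_{i∈I^c} is a Parseval tight frame for the orthogonal complement V^⊥. -/

import Mathlib

/-!
Commuting with `Q_I` says that the Gram matrix `F*F` is block diagonal with respect to
`I ⊔ Iᶜ`, i.e. `⟪fᵢ, fⱼ⟫ = 0` whenever `i ∈ I` and `j ∉ I`. Hence `V = span {fᵢ : i ∈ I}`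
contains the `I`-vectors and `Vᗮ` the others. For `v ∈ V` the terms `⟪v, fⱼ⟫`, `j ∉ I`, of the
Parseval identity vanish, and symmetrically on `Vᗮ`.
-/

theorem Matrix.apply_eq_zero_of_commute_diagonal_indicator {ι R : Type*}
    [Fintype ι] [DecidableEq ι] [NonAssocSemiring R] {A : Matrix ι ι R} {s : Finset ι}
    (hcomm : A * Matrix.diagonal (fun i => if i ∈ s then (1 : R) else 0) =
      Matrix.diagonal (fun i => if i ∈ s then (1 : R) else 0) * A)
    {i j : ι} (hi : i ∈ s) (hj : j ∉ s) : A i j = 0 := by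
  have h := congrFun (congrFun hcomm i) j
  rw [Matrix.mul_diagonal, Matrix.diagonal_mul] at h
  simpa [hi, hj] using h.symm

theorem Matrix.conjTranspose_mul_self_apply_eq_inner {𝕜 ι m : Type*} [RCLike 𝕜] [Fintype m]
    {f : ι → EuclideanSpace 𝕜 m} {F : Matrix m ι 𝕜} (hF : ∀ i j, F j i = f i j) (i j : ι) :
    (F.conjTranspose * F) i j = inner 𝕜 (f i) (f j) := by
  simp [Matrix.mul_apply, PiLp.inner_apply, hF, mul_comm]

theorem sq_norm_eq_sum_of_inner_eq_zero {𝕜 ι E : Type*} [RCLike 𝕜] [Fintype ι]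
    [NormedAddCommGroup E] [InnerProductSpace 𝕜 E] {f : ι → E}
    (hframe : ∀ v : E, ‖v‖ ^ 2 = ∑ i, ‖(inner 𝕜 v (f i) : 𝕜)‖ ^ 2) (s : Finset ι) {v : E}
    (hv : ∀ i ∉ s, (inner 𝕜 v (f i) : 𝕜) = 0) :
    ‖v‖ ^ 2 = ∑ i ∈ s, ‖(inner 𝕜 v (f i) : 𝕜)‖ ^ 2 := by
  rw [hframe v]
  exact (Finset.sum_subset (Finset.subset_univ s) fun i _ hi => by simp [hv i hi]).symm

/-- If `F` is a Parseval tight frame in `ℂⁿ` and the Gram matrix `Fᴴ F` commutes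
with the coordinate projection `Q_I`, then the frame splits orthogonally: the vectors
indexed by `I` form a Parseval frame for a subspace `V` and those indexed by `Iᶜ`
form a Parseval frame for `Vᗮ`. -/
theorem stmt2 (n k : ℕ) (f : Fin k → EuclideanSpace ℂ (Fin n))
    (hframe : ∀ v : EuclideanSpace ℂ (Fin n),
      ‖v‖ ^ 2 = ∑ i : Fin k, ‖(inner ℂ v (f i) : ℂ)‖ ^ 2)
    (F : Matrix (Fin n) (Fin k) ℂ) (hF : ∀ i j, F j i = f i j)
    (I : Finset (Fin k))
    (Q : Matrix (Fin k) (Fin k) ℂ)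
    (hQ : Q = Matrix.diagonal (fun i => if i ∈ I then (1 : ℂ) else 0))
    (hcomm : (F.conjTranspose * F) * Q = Q * (F.conjTranspose * F)) :
    ∃ V : Submodule ℂ (EuclideanSpace ℂ (Fin n)),
      (∀ i ∈ I, f i ∈ V) ∧ (∀ i ∉ I, f i ∈ Vᗮ) ∧
      (∀ v ∈ V, ‖v‖ ^ 2 = ∑ i ∈ I, ‖(inner ℂ v (f i) : ℂ)‖ ^ 2) ∧
      (∀ v ∈ Vᗮ, ‖v‖ ^ 2 = ∑ i ∈ Iᶜ, ‖(inner ℂ v (f i) : ℂ)‖ ^ 2) := by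
  subst hQ
  have hortho : Submodule.span ℂ (f '' I) ⟂ Submodule.span ℂ (f '' ↑Iᶜ) := by
    rw [Submodule.isOrtho_span]
    rintro _ ⟨i, hi, rfl⟩ _ ⟨j, hj, rfl⟩
    rw [← Matrix.conjTranspose_mul_self_apply_eq_inner hF]
    exact Matrix.apply_eq_zero_of_commute_diagonal_indicator hcomm hi (by simpa using hj)
  have hmem : ∀ i ∈ I, f i ∈ Submodule.span ℂ (f '' I) := fun i hi =>
    Submodule.subset_span ⟨i, hi, rfl⟩
  have hmem_orthogonal : ∀ i ∉ I, f i ∈ (Submodule.span ℂ (f '' I))ᗮ := fun i hi =>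
    Submodule.isOrtho_iff_le.mp hortho.symm (Submodule.subset_span ⟨i, by simpa using hi, rfl⟩)
  refine ⟨_, hmem, hmem_orthogonal, fun v hv => ?_, fun v hv => ?_⟩
  · exact sq_norm_eq_sum_of_inner_eq_zero hframe I fun i hi =>
      Submodule.inner_right_of_mem_orthogonal hv (hmem_orthogonal i hi)
  · exact sq_norm_eq_sum_of_inner_eq_zero hframe Iᶜ fun i hi =>
      Submodule.inner_left_of_mem_orthogonal (hmem i (by simpa using hi)) hv
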